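/- arXiv:2408.03179 — 2 statements merged into one kernel-verified Lean document; each statement's English description precedes it below -/
import Mathlib

section
/- Let W = {(W_i, ω_i)}_{i∈I} be a fusion frame for a Hilbert space H with fusion frame operator S_W, and let {e_{i,j}}_{j∈J_i} be an orthonormal basis of W_i for each i. Then the excess of W satisfies e(W) = Σ_{i∈I} Σ_{j∈J_i} (1 − ω_i² ⟨e_{i,j}, S_W^{-1} e_{i,j}⟩). -/
noncomputable section
open scoped ENNReal

/-- `W = {(W i, ω i)}` is a fusion frame for `H`. -/
def IsFusionFrame {H : Type} [NormedAddCommGroup H] [InnerProductSpace ℂ H]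
    {ι : Type} (W : ι → Submodule ℂ H) [∀ i, Submodule.HasOrthogonalProjection (W i)]
    (ω : ι → ℝ) : Prop :=
  (∀ i, 0 < ω i) ∧ ∃ A B : ℝ, 0 < A ∧ A ≤ B ∧ ∀ f : H,
    (A * ‖f‖ ^ 2 ≤ ∑' i, ω i ^ 2 * ‖((W i).orthogonalProjectionOnto f : H)‖ ^ 2) ∧
    (∑' i, ω i ^ 2 * ‖((W i).orthogonalProjectionOnto f : H)‖ ^ 2 ≤ B * ‖f‖ ^ 2)

/-- `W = {(W i, ω i)}` is a fusion Riesz basis for `H`. -/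
def IsFusionRieszBasis {H : Type} [NormedAddCommGroup H] [InnerProductSpace ℂ H]
    {ι : Type} (W : ι → Submodule ℂ H) (ω : ι → ℝ) : Prop :=
  (∀ i, 0 < ω i) ∧ (⨆ i, W i).topologicalClosure = ⊤ ∧
  ∃ C D : ℝ, 0 < C ∧ C ≤ D ∧ ∀ (s : Finset ι) (f : ∀ i, W i),
    (C * ∑ j ∈ s, ‖(f j : H)‖ ^ 2 ≤ ‖∑ j ∈ s, ω j • (f j : H)‖ ^ 2) ∧
    (‖∑ j ∈ s, ω j • (f j : H)‖ ^ 2 ≤ D * ∑ j ∈ s, ‖(f j : H)‖ ^ 2)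

/-! The map `P = I - T_W* S_W⁻¹ T_W` is the orthogonal projection onto `ker T_W`, because
`T_W T_W* = S_W`. The vectors `δ_{i,j} = single i e_{i,j}` form a Parseval frame of `⊕ W_i`, and
for a Parseval frame `δ` and a Hilbert basis `u` of a closed subspace `K`,
`∑_p ‖π_K δ_p‖² = ∑_y ∑_p |⟪δ_p, u_y⟫|² = ∑_y ‖u_y‖²` counts `u`, i.e. is the dimension of `K`.
Finally `‖P δ_{i,j}‖² = 1 - ⟪T_W δ_{i,j}, S_W⁻¹ T_W δ_{i,j}⟫ = 1 - ω_i² ⟪e_{i,j}, S_W⁻¹ e_{i,j}⟫`.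
-/

open scoped InnerProductSpace
open ContinuousLinearMap (adjoint adjoint_inner_right)

universe v w

theorem lp.tsum_ofReal_norm_sq {ι : Type*} {G : ι → Type*} [∀ i, NormedAddCommGroup (G i)]
    (f : lp G 2) : ∑' i, ENNReal.ofReal (‖f i‖ ^ 2) = ENNReal.ofReal (‖f‖ ^ 2) := by
  have h := lp.hasSum_norm (p := 2) (by norm_num) f
  simp only [ENNReal.toReal_ofNat, Real.rpow_two] at h
  rw [← h.tsum_eq, ENNReal.ofReal_tsum_of_nonneg (fun i => by positivity) h.summable]

section ParsevalFrame

variable (𝕜 : Type*) {E : Type v} [RCLike 𝕜] [NormedAddCommGroup E] [InnerProductSpace 𝕜 E]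

def IsParsevalFrame {α : Type*} (δ : α → E) : Prop :=
  ∀ v, ∑' p, ENNReal.ofReal (‖⟪δ p, v⟫_𝕜‖ ^ 2) = ENNReal.ofReal (‖v‖ ^ 2)

variable {𝕜}

theorem HilbertBasis.isParsevalFrame {γ : Type*} (b : HilbertBasis γ 𝕜 E) :
    IsParsevalFrame 𝕜 b := fun v => by
  simpa only [b.repr_apply_apply, b.repr.norm_map] using lp.tsum_ofReal_norm_sq (b.repr v)

/-- In infinite dimension the Hamel dimension `Module.rank` exceeds the Hilbert dimension, but
both are infinite. -/
theorem HilbertBasis.toENat_rank {γ : Type w} (b : HilbertBasis γ 𝕜 E) :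
    (Module.rank 𝕜 E).toENat = ENat.card γ := by
  rcases finite_or_infinite γ with hγ | hγ
  · have := Fintype.ofFinite γ
    rw [ENat.card, ← Cardinal.toENat_lift.{w, v} (c := Cardinal.mk γ),
      ← Cardinal.toENat_lift.{v, w} (c := Module.rank 𝕜 E),
      b.toOrthonormalBasis.toBasis.mk_eq_rank]
  · rw [ENat.card_eq_top_of_infinite, Cardinal.toENat_eq_top]
    exact Cardinal.aleph0_le_lift.mp
      ((Cardinal.aleph0_le_lift.mpr (Cardinal.infinite_iff.mp hγ)).trans
        b.orthonormal.linearIndependent.cardinal_lift_le_rank)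

theorem IsParsevalFrame.tsum_norm_sq_orthogonalProjectionOnto {α : Type*} {δ : α → E}
    (hδ : IsParsevalFrame 𝕜 δ) (K : Submodule 𝕜 E) [CompleteSpace K] :
    ∑' p, ENNReal.ofReal (‖K.orthogonalProjectionOnto (δ p)‖ ^ 2) =
      (Module.rank 𝕜 K).toENat := by
  obtain ⟨w, u, -⟩ := exists_hilbertBasis 𝕜 K
  calc ∑' p, ENNReal.ofReal (‖K.orthogonalProjectionOnto (δ p)‖ ^ 2)
      = ∑' p, ∑' y, ENNReal.ofReal (‖⟪(u y : E), δ p⟫_𝕜‖ ^ 2) := by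
        refine tsum_congr fun p => ?_
        simp only [← u.isParsevalFrame (K.orthogonalProjectionOnto (δ p)),
          Submodule.inner_orthogonalProjectionOnto_eq_of_mem_left]
    _ = ∑' y, ∑' p, ENNReal.ofReal (‖⟪δ p, (u y : E)⟫_𝕜‖ ^ 2) := by
        rw [ENNReal.tsum_comm]
        simp only [norm_inner_symm]
    _ = ∑' _ : w, 1 := by
        refine tsum_congr fun y => ?_
        rw [hδ, show ‖(u y : E)‖ = 1 from u.orthonormal.1 y, one_pow, ENNReal.ofReal_one]
    _ = (Module.rank 𝕜 K).toENat := by rw [ENNReal.tsum_one, u.toENat_rank]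

theorem lp.isParsevalFrame_single {ι : Type*} [DecidableEq ι] {G : ι → Type*}
    [∀ i, NormedAddCommGroup (G i)] [∀ i, InnerProductSpace 𝕜 (G i)] {J : ι → Type*}
    {b : ∀ i, J i → G i} (hb : ∀ i, IsParsevalFrame 𝕜 (b i)) :
    IsParsevalFrame 𝕜 (fun p : Σ i, J i => lp.single 2 p.1 (b p.1 p.2)) := fun f => by
  simp only [lp.inner_single_left]
  rw [ENNReal.tsum_sigma', ← lp.tsum_ofReal_norm_sq f]
  exact tsum_congr fun i => hb i (f i)

end ParsevalFrame

namespace ContinuousLinearMap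

variable {𝕜 E F : Type*} [RCLike 𝕜] [NormedAddCommGroup E] [InnerProductSpace 𝕜 E]
  [CompleteSpace E] [NormedAddCommGroup F] [InnerProductSpace 𝕜 F] [CompleteSpace F]
  {T : E →L[𝕜] F} {S : F ≃L[𝕜] F}

theorem starProjection_ker_eq_sub (hTS : ∀ f, T (adjoint T f) = S f) (x : E) :
    (LinearMap.ker (T : E →ₗ[𝕜] F)).starProjection x = x - adjoint T (S.symm (T x)) := by
  refine Submodule.eq_starProjection_of_mem_orthogonal ?_ ?_
  · simp [hTS]
  · rw [sub_sub_cancel]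
    intro w hw
    rw [adjoint_inner_right, show T w = 0 from hw, inner_zero_left]

theorem norm_sq_orthogonalProjectionOnto_ker (hTS : ∀ f, T (adjoint T f) = S f) (x : E) :
    ‖(LinearMap.ker (T : E →ₗ[𝕜] F)).orthogonalProjectionOnto x‖ ^ 2 =
      ‖x‖ ^ 2 - RCLike.re ⟪T x, S.symm (T x)⟫_𝕜 := by
  rw [← Submodule.re_inner_starProjection_eq_normSq, starProjection_ker_eq_sub hTS,
    inner_sub_left, map_sub, adjoint_inner_left, inner_self_eq_norm_sq, inner_re_symm]

end ContinuousLinearMap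

section FusionSynthesis

variable {H : Type*} [NormedAddCommGroup H] [InnerProductSpace ℂ H] {ι : Type*}

def IsFusionSynthesis (W : ι → Submodule ℂ H) (ω : ι → ℝ)
    (T : lp (fun i => W i) 2 →L[ℂ] H) : Prop :=
  ∀ g : lp (fun i => W i) 2, T g = ∑' i, ω i • (g i : H)

variable {W : ι → Submodule ℂ H} {ω : ι → ℝ} {T : lp (fun i => W i) 2 →L[ℂ] H}

namespace IsFusionSynthesis

theorem apply_single [DecidableEq ι] (hT : IsFusionSynthesis W ω T) (i : ι) (x : W i) :
    T (lp.single 2 i x) = ω i • (x : H) := by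
  rw [hT, tsum_eq_single i fun j hj => by simp [Pi.single_eq_of_ne hj], lp.single_apply_self]

variable [CompleteSpace H] [∀ i, CompleteSpace (W i)]

theorem adjoint_apply (hT : IsFusionSynthesis W ω T) (f : H) (i : ι) :
    adjoint T f i = ω i • (W i).orthogonalProjectionOnto f := by
  classical
  refine ext_inner_left ℂ fun v => ?_
  calc ⟪v, adjoint T f i⟫_ℂ = ⟪lp.single 2 i v, adjoint T f⟫_ℂ :=
        (lp.inner_single_left i v (adjoint T f)).symm
    _ = _ := by
      rw [adjoint_inner_right, hT.apply_single, inner_smul_left_eq_star_smul,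
        inner_smul_right_eq_smul, conj_trivial,
        Submodule.inner_orthogonalProjectionOnto_eq_of_mem_left]

theorem apply_adjoint (hT : IsFusionSynthesis W ω T) (f : H) :
    T (adjoint T f) = ∑' i, ω i ^ 2 • ((W i).orthogonalProjectionOnto f : H) := by
  rw [hT]
  refine tsum_congr fun i => ?_
  rw [hT.adjoint_apply, Submodule.coe_smul_of_tower, smul_smul, sq]

end IsFusionSynthesis

end FusionSynthesis

theorem excess_eq_tsum_one_sub_general
    {H : Type} [NormedAddCommGroup H] [InnerProductSpace ℂ H] [CompleteSpace H]
    {ι : Type} (W : ι → Submodule ℂ H) [∀ i, CompleteSpace (W i)] (ω : ι → ℝ)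
    -- `{e i j}_{j ∈ J i}` is an orthonormal basis of `W i`:
    {J : ι → Type} (e : ∀ i, J i → W i)
    (he : ∀ i, Orthonormal ℂ (e i))
    (hespan : ∀ i, (Submodule.span ℂ (Set.range (e i))).topologicalClosure = ⊤)
    -- the fusion frame operator `S_W` (an invertible operator):
    (S : H ≃L[ℂ] H)
    (hS : ∀ f : H, S f = ∑' i, ω i ^ 2 • ((W i).orthogonalProjectionOnto f : H))
    -- the synthesis operator:
    (TW : lp (fun i => ↥(W i)) 2 →L[ℂ] H)
    (hTW : ∀ g : lp (fun i => ↥(W i)) 2, TW g = ∑' i, ω i • ((g i : H))) :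
    ((Cardinal.toENat (Module.rank ℂ (LinearMap.ker (TW : lp (fun i => ↥(W i)) 2 →ₗ[ℂ] H))) : ℕ∞) : ℝ≥0∞) =
      ∑' p : Σ i, J i, ENNReal.ofReal
        (1 - ω p.1 ^ 2 * (inner ℂ ((e p.1 p.2 : H)) (S.symm (e p.1 p.2 : H)) : ℂ).re) := by
  classical
  have hTS : ∀ f, TW (adjoint TW f) = S f := fun f => by
    rw [hS, IsFusionSynthesis.apply_adjoint hTW]
  have hδ := lp.isParsevalFrame_single (G := fun i => W i)
    fun i => (HilbertBasis.mk (he i) (hespan i).ge).isParsevalFrame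
  have hquad (r : ℝ) (x : H) :
      RCLike.re ⟪r • x, S.symm (r • x)⟫_ℂ = r ^ 2 * (⟪x, S.symm x⟫_ℂ).re := by
    rw [RCLike.real_smul_eq_coe_smul (K := ℂ), map_smul, inner_smul_real_left,
      inner_smul_real_right, RCLike.smul_re, RCLike.smul_re, RCLike.re_to_complex, ← mul_assoc, sq]
  rw [← hδ.tsum_norm_sq_orthogonalProjectionOnto]
  refine tsum_congr fun p => ?_
  rw [ContinuousLinearMap.norm_sq_orthogonalProjectionOnto_ker hTS, HilbertBasis.coe_mk,
    IsFusionSynthesis.apply_single hTW, hquad, lp.norm_single (by norm_num), (he p.1).1 p.2,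
    one_pow]

/-- `e(W) = ∑_{i,j} (1 − ω i ^ 2 ⟨e_{i,j}, S_W⁻¹ e_{i,j}⟩)`. -/
theorem excess_eq_tsum_one_sub
    {H : Type} [NormedAddCommGroup H] [InnerProductSpace ℂ H] [CompleteSpace H]
    {ι : Type} (W : ι → Submodule ℂ H) [∀ i, CompleteSpace (W i)] (ω : ι → ℝ)
    (hW : IsFusionFrame W ω)
    -- `{e i j}_{j ∈ J i}` is an orthonormal basis of `W i`:
    {J : ι → Type} (e : ∀ i, J i → W i)
    (he : ∀ i, Orthonormal ℂ (e i))
    (hespan : ∀ i, (Submodule.span ℂ (Set.range (e i))).topologicalClosure = ⊤)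
    -- the fusion frame operator `S_W` (an invertible operator):
    (S : H ≃L[ℂ] H)
    (hS : ∀ f : H, S f = ∑' i, ω i ^ 2 • ((W i).orthogonalProjectionOnto f : H))
    -- the synthesis operator:
    (TW : lp (fun i => ↥(W i)) 2 →L[ℂ] H)
    (hTW : ∀ g : lp (fun i => ↥(W i)) 2, TW g = ∑' i, ω i • ((g i : H))) :
    ((Cardinal.toENat (Module.rank ℂ (LinearMap.ker (TW : lp (fun i => ↥(W i)) 2 →ₗ[ℂ] H))) : ℕ∞) : ℝ≥0∞) =
      ∑' p : Σ i, J i, ENNReal.ofReal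
        (1 - ω p.1 ^ 2 * (inner ℂ ((e p.1 p.2 : H)) (S.symm (e p.1 p.2 : H)) : ℂ).re) :=
  excess_eq_tsum_one_sub_general W ω e he hespan S hS TW hTW
end
end

section
/- Let W = {(W_1, ω_1), (W_2, ω_2)} be a fusion Riesz basis for an infinite-dimensional Hilbert space H with exactly two subspaces. Then the orthogonal complement family W⊥ = {(W_1⊥, ω_1), (W_2⊥, ω_2)} is a fusion Riesz basis, and e(W⊥) = 0. -/
/-! The Riesz inequality for `{W₁, W₂}` says that `(u, v) ↦ u + v` is bounded below on `W₁ × W₂`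
(the weights only rescale vectors inside the subspaces); with dense range this makes `H = W₁ ⊕ W₂`
a topological direct sum. For `g ∈ W₁ᗮ`, `h ∈ W₂ᗮ`, decompose `h = u + v` along this sum: then
`‖h‖² = re ⟪u, g + h⟫ ≤ ‖u‖ ‖g + h‖` while `‖u‖ ≲ ‖h‖`, so `‖h‖ ≲ ‖g + h‖`, and symmetrically for `g`.
This is the Riesz inequality for the complements; they are complete since
`(W₁ᗮ ⊔ W₂ᗮ)ᗮ = W₁ ⊓ W₂ = ⊥`, and a lower Riesz bound makes the synthesis operator injective. -/

noncomputable section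
open scoped ENNReal

open scoped InnerProductSpace

section Geometry

variable {𝕜 E : Type*} [RCLike 𝕜] [NormedAddCommGroup E] [InnerProductSpace 𝕜 E]
  {U V : Submodule 𝕜 E} {c : ℝ}

lemma inf_eq_bot_of_lower_bound (hc : 0 < c)
    (hUV : ∀ u ∈ U, ∀ v ∈ V, c * (‖u‖ ^ 2 + ‖v‖ ^ 2) ≤ ‖u + v‖ ^ 2) : U ⊓ V = ⊥ := by
  refine (Submodule.eq_bot_iff _).2 fun x hx => ?_
  have h := hUV x hx.1 (-x) (V.neg_mem hx.2)
  rw [add_neg_cancel, norm_zero, norm_neg] at h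
  have : ‖x‖ ^ 2 = 0 := by nlinarith [sq_nonneg ‖x‖]
  simpa using this

lemma isClosed_sup_of_lower_bound [CompleteSpace U] [CompleteSpace V] (hc : 0 < c)
    (hUV : ∀ u ∈ U, ∀ v ∈ V, c * (‖u‖ ^ 2 + ‖v‖ ^ 2) ≤ ‖u + v‖ ^ 2) :
    IsClosed ((U ⊔ V : Submodule 𝕜 E) : Set E) := by
  let L : U × V →L[𝕜] E := U.subtypeL.coprod V.subtypeL
  have hL : AntilipschitzWith (Real.sqrt c)⁻¹.toNNReal L := by
    refine L.antilipschitz_of_bound fun p => ?_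
    have hp : c * ‖p‖ ^ 2 ≤ ‖L p‖ ^ 2 := by
      refine le_trans ?_ (hUV p.1 p.1.2 p.2 p.2.2)
      rw [Prod.norm_def]
      rcases le_total ‖p.1‖ ‖p.2‖ with h | h <;> simp only [max_eq_left, max_eq_right, h] <;>
        gcongr <;> simp
    rw [Real.coe_toNNReal _ (by positivity), inv_mul_eq_div, le_div_iff₀ (by positivity),
      mul_comm, ← Real.sqrt_sq (norm_nonneg (L p)), ← Real.sqrt_sq (norm_nonneg p),
      ← Real.sqrt_mul hc.le]
    exact Real.sqrt_le_sqrt hp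
  have hrange : LinearMap.range (L : U × V →ₗ[𝕜] E) = U ⊔ V := by
    simp [L, ContinuousLinearMap.coe_coprod, LinearMap.range_coprod]
  rw [← hrange, LinearMap.coe_range]
  exact hL.isClosed_range L.uniformContinuous

lemma mul_norm_sq_le_of_mem_orthogonal (hc : 0 ≤ c)
    (hUV : ∀ u ∈ U, ∀ v ∈ V, c * ‖u‖ ^ 2 ≤ ‖u + v‖ ^ 2) (hsup : U ⊔ V = ⊤)
    {g h : E} (hg : g ∈ Uᗮ) (hh : h ∈ Vᗮ) : c * ‖h‖ ^ 2 ≤ ‖g + h‖ ^ 2 := by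
  obtain ⟨u, hu, v, hv, huv⟩ := Submodule.mem_sup.1 (hsup ▸ Submodule.mem_top (x := h))
  have hnorm : ‖h‖ ^ 2 ≤ ‖u‖ * ‖g + h‖ :=
    calc ‖h‖ ^ 2 = RCLike.re ⟪u + v, h⟫_𝕜 := by rw [huv, inner_self_eq_norm_sq]
      _ = RCLike.re ⟪u, g + h⟫_𝕜 := by
        rw [inner_add_left, inner_add_right, Submodule.inner_right_of_mem_orthogonal hv hh,
          Submodule.inner_right_of_mem_orthogonal hu hg, add_zero, zero_add]
      _ ≤ ‖u‖ * ‖g + h‖ := re_inner_le_norm u _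
  have hu2 : c * ‖u‖ ^ 2 ≤ ‖h‖ ^ 2 := huv ▸ hUV u hu v hv
  have h4 : ‖h‖ ^ 2 * (c * ‖h‖ ^ 2) ≤ ‖h‖ ^ 2 * ‖g + h‖ ^ 2 := by
    have := mul_self_le_mul_self (sq_nonneg _) hnorm
    nlinarith [mul_le_mul_of_nonneg_right hu2 (sq_nonneg ‖g + h‖)]
  rcases (sq_nonneg ‖h‖).eq_or_lt with h0 | hpos
  · rw [← h0]; simp
  · exact le_of_mul_le_mul_left h4 hpos

lemma orthogonal_lower_bound (hc : 0 ≤ c)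
    (hUV : ∀ u ∈ U, ∀ v ∈ V, c * (‖u‖ ^ 2 + ‖v‖ ^ 2) ≤ ‖u + v‖ ^ 2) (hsup : U ⊔ V = ⊤) :
    ∀ g ∈ Uᗮ, ∀ h ∈ Vᗮ, c / 2 * (‖g‖ ^ 2 + ‖h‖ ^ 2) ≤ ‖g + h‖ ^ 2 := by
  intro g hg h hh
  have hh' := mul_norm_sq_le_of_mem_orthogonal hc
    (fun u hu v hv => le_trans (by nlinarith [sq_nonneg ‖v‖]) (hUV u hu v hv)) hsup hg hh
  have hg' := mul_norm_sq_le_of_mem_orthogonal (U := V) (V := U) hc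
    (fun v hv u hu => add_comm u v ▸ le_trans (by nlinarith [sq_nonneg ‖u‖]) (hUV u hu v hv))
    (sup_comm U V ▸ hsup) hh hg
  rw [add_comm h g] at hg'
  linarith

lemma topologicalClosure_orthogonal_sup_eq_top [CompleteSpace E] [U.HasOrthogonalProjection]
    [V.HasOrthogonalProjection] (h : U ⊓ V = ⊥) : (Uᗮ ⊔ Vᗮ).topologicalClosure = ⊤ := by
  rw [← Submodule.orthogonal_orthogonal_eq_closure, ← Submodule.inf_orthogonal,
    Submodule.orthogonal_orthogonal, Submodule.orthogonal_orthogonal, h,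
    Submodule.bot_orthogonal_eq_top]

end Geometry

lemma norm_sum_smul_sq_le {ι E : Type*} [SeminormedAddCommGroup E] [NormedSpace ℝ E]
    (s : Finset ι) (ω : ι → ℝ) (x : ι → E) :
    ‖∑ j ∈ s, ω j • x j‖ ^ 2 ≤ (∑ j ∈ s, ω j ^ 2) * ∑ j ∈ s, ‖x j‖ ^ 2 :=
  calc ‖∑ j ∈ s, ω j • x j‖ ^ 2 ≤ (∑ j ∈ s, |ω j| * ‖x j‖) ^ 2 := by
        gcongr
        exact (norm_sum_le _ _).trans_eq (by simp [norm_smul])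
    _ ≤ (∑ j ∈ s, |ω j| ^ 2) * ∑ j ∈ s, ‖x j‖ ^ 2 := Finset.sum_mul_sq_le_sq_mul_sq _ _ _
    _ = (∑ j ∈ s, ω j ^ 2) * ∑ j ∈ s, ‖x j‖ ^ 2 := by simp only [sq_abs]

section FusionRieszBasis

variable {H : Type} [NormedAddCommGroup H] [InnerProductSpace ℂ H]

lemma isFusionRieszBasis_of_lower_bound {ι : Type} [Fintype ι] {W : ι → Submodule ℂ H}
    {ω : ι → ℝ} (hω : ∀ i, 0 < ω i) (hcl : (⨆ i, W i).topologicalClosure = ⊤) {C : ℝ}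
    (hC : 0 < C)
    (hlow : ∀ f : ∀ i, W i, C * ∑ j, ‖(f j : H)‖ ^ 2 ≤ ‖∑ j, ω j • (f j : H)‖ ^ 2) :
    IsFusionRieszBasis W ω := by
  classical
  refine ⟨hω, hcl, C, max C (∑ j, ω j ^ 2), hC, le_max_left _ _, fun s f => ⟨?_, ?_⟩⟩
  · let g : ∀ i, W i := fun j => if j ∈ s then f j else 0
    have hnorm : ∑ j ∈ s, ‖(f j : H)‖ ^ 2 = ∑ j, ‖(g j : H)‖ ^ 2 := by
      rw [← Finset.sum_subset (Finset.subset_univ s) fun j _ hj => by simp [g, hj]]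
      exact Finset.sum_congr rfl fun j hj => by simp [g, hj]
    have hsum : ∑ j ∈ s, ω j • (f j : H) = ∑ j, ω j • (g j : H) := by
      rw [← Finset.sum_subset (Finset.subset_univ s) fun j _ hj => by simp [g, hj]]
      exact Finset.sum_congr rfl fun j hj => by simp [g, hj]
    rw [hnorm, hsum]
    exact hlow g
  · refine (norm_sum_smul_sq_le s ω _).trans (mul_le_mul_of_nonneg_right ?_ (by positivity))
    exact (Finset.sum_le_sum_of_subset_of_nonneg (Finset.subset_univ s)
      fun j _ _ => sq_nonneg _).trans (le_max_right _ _)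

lemma isFusionRieszBasis_pair_iff {U V : Submodule ℂ H} {a b : ℝ} :
    IsFusionRieszBasis ![U, V] ![a, b] ↔ 0 < a ∧ 0 < b ∧ (U ⊔ V).topologicalClosure = ⊤ ∧
      ∃ C > 0, ∀ u ∈ U, ∀ v ∈ V, C * (‖u‖ ^ 2 + ‖v‖ ^ 2) ≤ ‖a • u + b • v‖ ^ 2 := by
  have hsup : ⨆ i, ![U, V] i = U ⊔ V := by
    rw [← Finset.sup_univ_eq_iSup]
    simp [Fin.univ_succ]
  constructor
  · rintro ⟨hω, hcl, C, _, hC, -, hR⟩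
    refine ⟨by simpa using hω 0, by simpa using hω 1, hsup ▸ hcl, C, hC, fun u hu v hv => ?_⟩
    have := (hR Finset.univ (Fin.cons ⟨u, hu⟩ (Fin.cons ⟨v, hv⟩ finZeroElim))).1
    rwa [Fin.sum_univ_two, Fin.sum_univ_two] at this
  · rintro ⟨ha, hb, hcl, C, hC, h⟩
    refine isFusionRieszBasis_of_lower_bound (Fin.forall_fin_two.2 ⟨ha, hb⟩) (hsup ▸ hcl) hC
      fun f => ?_
    simpa [Fin.sum_univ_two] using h _ (f 0).2 _ (f 1).2

lemma exists_pair_lower_bound_of_reweight {U V : Submodule ℂ H} {a b a' b' C : ℝ}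
    (ha : a ≠ 0) (hb : b ≠ 0) (ha' : a' ≠ 0) (hb' : b' ≠ 0) (hC : 0 < C)
    (h : ∀ u ∈ U, ∀ v ∈ V, C * (‖u‖ ^ 2 + ‖v‖ ^ 2) ≤ ‖a • u + b • v‖ ^ 2) :
    ∃ C' > 0, ∀ u ∈ U, ∀ v ∈ V, C' * (‖u‖ ^ 2 + ‖v‖ ^ 2) ≤ ‖a' • u + b' • v‖ ^ 2 := by
  refine ⟨C * min ((a' / a) ^ 2) ((b' / b) ^ 2), by positivity, fun u hu v hv => ?_⟩
  have key := h _ (U.smul_of_tower_mem (a' / a) hu) _ (V.smul_of_tower_mem (b' / b) hv)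
  rw [smul_smul, smul_smul, mul_div_cancel₀ _ ha, mul_div_cancel₀ _ hb, norm_smul, norm_smul,
    mul_pow, mul_pow, Real.norm_eq_abs, Real.norm_eq_abs, sq_abs, sq_abs] at key
  refine le_trans ?_ key
  rw [mul_assoc]
  gcongr
  nlinarith [min_le_left ((a' / a) ^ 2) ((b' / b) ^ 2), min_le_right ((a' / a) ^ 2) ((b' / b) ^ 2),
    sq_nonneg ‖u‖, sq_nonneg ‖v‖]

lemma ker_eq_bot_of_pair_lower_bound {U V : Submodule ℂ H} {a b C : ℝ} (hC : 0 < C)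
    (h : ∀ u ∈ U, ∀ v ∈ V, C * (‖u‖ ^ 2 + ‖v‖ ^ 2) ≤ ‖a • u + b • v‖ ^ 2)
    (T : U × V →ₗ[ℂ] H) (hT : ∀ p : U × V, T p = a • (p.1 : H) + b • (p.2 : H)) :
    LinearMap.ker T = ⊥ := by
  refine (Submodule.eq_bot_iff _).2 fun p hp => ?_
  have hp0 := h _ p.1.2 _ p.2.2
  rw [← hT, LinearMap.mem_ker.1 hp, norm_zero] at hp0
  have h1 : ‖(p.1 : H)‖ ^ 2 = 0 := by nlinarith [sq_nonneg ‖(p.1 : H)‖, sq_nonneg ‖(p.2 : H)‖]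
  have h2 : ‖(p.2 : H)‖ ^ 2 = 0 := by nlinarith [sq_nonneg ‖(p.1 : H)‖, sq_nonneg ‖(p.2 : H)‖]
  exact Prod.ext (by simpa using h1) (by simpa using h2)

end FusionRieszBasis

theorem excess_orthogonalComplement_of_two_element_fusionRieszBasis_general
    {H : Type} [NormedAddCommGroup H] [InnerProductSpace ℂ H] [CompleteSpace H]
    (W₁ W₂ : Submodule ℂ H) [CompleteSpace W₁] [CompleteSpace W₂]
    (ω₁ ω₂ : ℝ)
    (hW : IsFusionRieszBasis (![W₁, W₂]) (![ω₁, ω₂]))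
    -- synthesis operator of `W⊥ = {(W₁ᗮ, ω₁), (W₂ᗮ, ω₂)}`:
    (T : (W₁ᗮ × W₂ᗮ) →L[ℂ] H)
    (hT : ∀ p : W₁ᗮ × W₂ᗮ, T p = ω₁ • (p.1 : H) + ω₂ • (p.2 : H)) :
    IsFusionRieszBasis (![W₁ᗮ, W₂ᗮ]) (![ω₁, ω₂]) ∧
      Module.rank ℂ (LinearMap.ker (T : (W₁ᗮ × W₂ᗮ) →ₗ[ℂ] H)) = 0 := by
  obtain ⟨hω₁, hω₂, hcl, C, hC, hbound⟩ := isFusionRieszBasis_pair_iff.1 hW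
  obtain ⟨c, hc, hsum⟩ : ∃ c > 0, ∀ u ∈ W₁, ∀ v ∈ W₂, c * (‖u‖ ^ 2 + ‖v‖ ^ 2) ≤ ‖u + v‖ ^ 2 := by
    simpa using exists_pair_lower_bound_of_reweight hω₁.ne' hω₂.ne' one_ne_zero one_ne_zero
      hC hbound
  have hsup : W₁ ⊔ W₂ = ⊤ := by
    rwa [← (isClosed_sup_of_lower_bound hc hsum).submodule_topologicalClosure_eq]
  obtain ⟨C', hC', hbound'⟩ := exists_pair_lower_bound_of_reweight one_ne_zero one_ne_zero
    hω₁.ne' hω₂.ne' (half_pos hc) (by simpa using orthogonal_lower_bound hc.le hsum hsup)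
  refine ⟨isFusionRieszBasis_pair_iff.2 ⟨hω₁, hω₂, ?_, C', hC', hbound'⟩, ?_⟩
  · exact topologicalClosure_orthogonal_sup_eq_top (inf_eq_bot_of_lower_bound hc hsum)
  · rw [ker_eq_bot_of_pair_lower_bound hC' hbound' _ hT, rank_bot]

/-- if `{(W₁, ω₁), (W₂, ω₂)}` is a fusion Riesz basis of an
infinite-dimensional Hilbert space, then `{(W₁ᗮ, ω₁), (W₂ᗮ, ω₂)}` is a fusion
Riesz basis and `e(W⊥) = 0`. -/
theorem excess_orthogonalComplement_of_two_element_fusionRieszBasis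
    {H : Type} [NormedAddCommGroup H] [InnerProductSpace ℂ H] [CompleteSpace H]
    (hinf : ¬ FiniteDimensional ℂ H)
    (W₁ W₂ : Submodule ℂ H) [CompleteSpace W₁] [CompleteSpace W₂]
    (ω₁ ω₂ : ℝ)
    (hW : IsFusionRieszBasis (![W₁, W₂]) (![ω₁, ω₂]))
    -- synthesis operator of `W⊥ = {(W₁ᗮ, ω₁), (W₂ᗮ, ω₂)}`:
    (T : (W₁ᗮ × W₂ᗮ) →L[ℂ] H)
    (hT : ∀ p : W₁ᗮ × W₂ᗮ, T p = ω₁ • (p.1 : H) + ω₂ • (p.2 : H)) :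
    IsFusionRieszBasis (![W₁ᗮ, W₂ᗮ]) (![ω₁, ω₂]) ∧
      Module.rank ℂ (LinearMap.ker (T : (W₁ᗮ × W₂ᗮ) →ₗ[ℂ] H)) = 0 :=
  excess_orthogonalComplement_of_two_element_fusionRieszBasis_general W₁ W₂ ω₁ ω₂ hW T hT
end
end
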